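/- arXiv:1209.3214 — 3 statements merged into one kernel-verified Lean document; each statement's English description precedes it below -/
import Mathlib

section
/- Let G be a complete t-partite graph on n vertices with t ≥ 3, and write n = tk + r with 0 ≤ r < t. Then q₁(G) ≤ ((3t−4)k + 3r − 2 + √(t²k² + ((2r+4)t − 8r)k + (r−2)²))/2, with equality if and only if G is the Turán graph T_{n,t}. -/
open SimpleGraph

/-- The signless Laplacian matrix `Q(G) = D(G) + A(G)` of a simple graph. -/
noncomputable def signlessLaplacian {V : Type*} [Fintype V] [DecidableEq V]
    (G : SimpleGraph V) : Matrix V V ℝ := by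
  classical exact Matrix.diagonal (fun v => (G.degree v : ℝ)) + G.adjMatrix ℝ

/-- The signless Laplacian spectral radius: the largest eigenvalue of `Q(G)`. -/
noncomputable def q1 {V : Type*} [Fintype V] [DecidableEq V] (G : SimpleGraph V) : ℝ :=
  sSup {μ : ℝ | ∃ x : V → ℝ, x ≠ 0 ∧ (signlessLaplacian G).mulVec x = μ • x}

/-- The join `G ∇ H` of two simple graphs. -/
def gJoin {α β : Type*} (G : SimpleGraph α) (H : SimpleGraph β) : SimpleGraph (α ⊕ β) where
  Adj x y :=
    Sum.elim (fun a => Sum.elim (fun b => G.Adj a b) (fun _ => True) y)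
             (fun a => Sum.elim (fun _ => True) (fun b => H.Adj a b) y) x
  symm := ⟨by rintro (a|a) (b|b) h <;> simp_all [SimpleGraph.adj_comm]⟩
  loopless := ⟨by rintro (a|a) h <;> simp_all⟩

/-- `G` is a complete multipartite graph with exactly `t` (nonempty) parts. -/
def IsCompleteMultipartite' {α : Type*} (G : SimpleGraph α) (t : ℕ) : Prop :=
  ∃ f : α → Fin t, Function.Surjective f ∧ ∀ u v, G.Adj u v ↔ f u ≠ f v

/-- The kite graph `Ki_{n,ω}`: a clique on `{0,…,ω-1}` together with a path on the
remaining vertices, attached to the clique by a bridge. -/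
def kite (n ω : ℕ) : SimpleGraph (Fin n) where
  Adj i j := i ≠ j ∧ (((i : ℕ) < ω ∧ (j : ℕ) < ω) ∨
    ((i : ℕ) + 1 = (j : ℕ) ∧ ω ≤ (j : ℕ)) ∨ ((j : ℕ) + 1 = (i : ℕ) ∧ ω ≤ (i : ℕ)))
  symm := ⟨by rintro i j ⟨h1, h2⟩; exact ⟨h1.symm, by tauto⟩⟩
  loopless := ⟨fun i h => h.1 rfl⟩

/-- The closed-form bound `((3ω-4)k + 3r - 2 + √(k²ω² + ((2r+4)ω-8r)k + (r-2)²))/2`. -/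
noncomputable def turanBound (ω k r : ℕ) : ℝ :=
  ((3 * (ω : ℝ) - 4) * k + 3 * r - 2 +
    Real.sqrt ((k : ℝ)^2 * (ω : ℝ)^2 + ((2 * (r : ℝ) + 4) * ω - 8 * r) * k + ((r : ℝ) - 2)^2)) / 2


/-!
Let the parts of `G` have sizes `m₁, …, m_t` and put `c = turanBound t k r - n`. Summing the
eigenvalue equation `Q x = μ x` over each part shows that every eigenvalue `μ > n - 1` satisfies
`∑ⱼ mⱼ / (μ - n + 2 mⱼ) = 1`, and conversely, if `∑ⱼ mⱼ / (c + 2 mⱼ) = 1` then `n + c` is an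
eigenvalue. The function `m ↦ m / (c + 2 m)` is concave and meets its secant through `k` and
`k + 1` only at integers `k` and `k + 1`, so `∑ⱼ mⱼ / (c + 2 mⱼ) ≤ 1`, with equality exactly when
all parts have size `k` or `k + 1`; here `1` is the value at the Turán partition, because `c` is a
root of the quadratic hidden in `turanBound`. As the left side decreases in `μ`, no eigenvalue
exceeds `n + c`, and `n + c` is attained iff the partition is balanced, i.e. `G ≅ T_{n,t}`.
-/

open Finset Matrix

section SignlessLaplacian

variable {V : Type*} [Fintype V] [DecidableEq V] (G : SimpleGraph V)

lemma signlessLaplacian_isHermitian : (signlessLaplacian G).IsHermitian := by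
  classical
  rw [signlessLaplacian]
  exact (Matrix.isHermitian_diagonal _).add (G.isHermitian_adjMatrix ℝ)

lemma signlessLaplacian_mulVec_apply [DecidableRel G.Adj] (x : V → ℝ) (v : V) :
    (signlessLaplacian G *ᵥ x) v = G.degree v * x v + ∑ u ∈ G.neighborFinset v, x u := by
  rw [signlessLaplacian, add_mulVec, Pi.add_apply, mulVec_diagonal, adjMatrix_mulVec_apply]
  congr!

lemma finite_setOf_mulVec_eq_smul (Q : Matrix V V ℝ) :
    {μ : ℝ | ∃ x : V → ℝ, x ≠ 0 ∧ Q *ᵥ x = μ • x}.Finite := by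
  refine (Module.End.finite_hasEigenvalue (Matrix.toLin' Q)).subset ?_
  rintro μ ⟨x, hx, hQx⟩
  exact Module.End.hasEigenvalue_of_hasEigenvector
    ⟨Module.End.mem_eigenspace_iff.mpr (by rwa [Matrix.toLin'_apply]), hx⟩

lemma le_q1 {μ : ℝ} {x : V → ℝ} (hx : x ≠ 0) (hQx : signlessLaplacian G *ᵥ x = μ • x) :
    μ ≤ q1 G :=
  le_csSup (finite_setOf_mulVec_eq_smul _).bddAbove ⟨x, hx, hQx⟩

lemma exists_mulVec_eq_q1_smul [Nonempty V] :
    ∃ x : V → ℝ, x ≠ 0 ∧ signlessLaplacian G *ᵥ x = q1 G • x := by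
  obtain ⟨i⟩ := ‹Nonempty V›
  have hQ := signlessLaplacian_isHermitian G
  have hne : {μ : ℝ | ∃ x : V → ℝ, x ≠ 0 ∧ signlessLaplacian G *ᵥ x = μ • x}.Nonempty :=
    ⟨hQ.eigenvalues i, _, fun h => (hQ.eigenvectorBasis.orthonormal.ne_zero i)
      (WithLp.ofLp_injective (p := 2) h), hQ.mulVec_eigenvectorBasis i⟩
  exact hne.csSup_mem (finite_setOf_mulVec_eq_smul _)

lemma q1_le [Nonempty V] {b : ℝ}
    (h : ∀ μ (x : V → ℝ), x ≠ 0 → signlessLaplacian G *ᵥ x = μ • x → μ ≤ b) : q1 G ≤ b := by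
  obtain ⟨x, hx, hQx⟩ := exists_mulVec_eq_q1_smul G
  exact h _ x hx hQx

end SignlessLaplacian

section CompleteMultipartite

variable {V ι : Type*} [Fintype V] [DecidableEq ι]

def partSize (f : V → ι) (j : ι) : ℕ := #{v | f v = j}

lemma partSize_pos {f : V → ι} (hf : Function.Surjective f) (j : ι) : 0 < partSize f j := by
  obtain ⟨v, rfl⟩ := hf j
  exact card_pos.mpr ⟨v, by simp⟩

lemma sum_partSize [Fintype ι] (f : V → ι) : ∑ j, partSize f j = Fintype.card V :=
  (card_eq_sum_card_fiberwise fun v _ => mem_univ (f v)).symm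

variable {G : SimpleGraph V} [DecidableRel G.Adj] {f : V → ι}

lemma degree_add_partSize (hadj : ∀ u v, G.Adj u v ↔ f u ≠ f v) (v : V) :
    G.degree v + partSize f (f v) = Fintype.card V := by
  have hN : G.neighborFinset v = ({u | f u ≠ f v} : Finset V) := by
    ext u
    simp [hadj v u, ne_comm]
  rw [← card_neighborFinset_eq_degree, hN, partSize, add_comm,
    card_filter_add_card_filter_not, card_univ]

variable [DecidableEq V]

lemma signlessLaplacian_mulVec_apply_of_adj_iff (hadj : ∀ u v, G.Adj u v ↔ f u ≠ f v)
    (x : V → ℝ) (v : V) :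
    (signlessLaplacian G *ᵥ x) v = (Fintype.card V - partSize f (f v) : ℝ) * x v +
      (∑ u, x u - ∑ u with f u = f v, x u) := by
  have hdeg : (G.degree v : ℝ) = Fintype.card V - partSize f (f v) := by
    rw [← degree_add_partSize hadj v]; push_cast; ring
  have hN : ∑ u ∈ G.neighborFinset v, x u = ∑ u, x u - ∑ u with f u = f v, x u := by
    rw [← sum_filter_add_sum_filter_not univ (fun u => f u = f v), add_sub_cancel_left]
    congr 1
    ext u
    simp [hadj v u, ne_comm]
  rw [signlessLaplacian_mulVec_apply, hdeg, hN]

end CompleteMultipartite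

section Spectrum

variable {V ι : Type*} [Fintype V] [DecidableEq V] [Fintype ι] [DecidableEq ι]
  {G : SimpleGraph V} [DecidableRel G.Adj] {f : V → ι}

lemma sum_partSize_div_eq_one (hf : Function.Surjective f) (hadj : ∀ u v, G.Adj u v ↔ f u ≠ f v)
    {μ : ℝ} {x : V → ℝ} (hx : x ≠ 0) (hQx : signlessLaplacian G *ᵥ x = μ • x)
    (hμ : (Fintype.card V : ℝ) - 1 < μ) :
    ∑ j, (partSize f j : ℝ) / (μ - Fintype.card V + 2 * partSize f j) = 1 := by
  set N : ℝ := (Fintype.card V : ℝ)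
  set S := ∑ u, x u
  set C : ι → ℝ := fun j => ∑ u with f u = j, x u
  have hm (j : ι) : (1 : ℝ) ≤ partSize f j := Nat.one_le_cast.mpr (partSize_pos hf j)
  have hvertex (v : V) : (μ - N + partSize f (f v)) * x v = S - C (f v) := by
    have := congrFun hQx v
    rw [signlessLaplacian_mulVec_apply_of_adj_iff hadj, Pi.smul_apply, smul_eq_mul] at this
    linarith
  have hpart (j : ι) : (μ - N + 2 * partSize f j) * C j = partSize f j * S := by
    have : (μ - N + partSize f j) * C j = partSize f j * (S - C j) :=
      calc (μ - N + partSize f j) * C j = ∑ u with f u = j, (S - C j) := by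
            rw [mul_sum]
            refine sum_congr rfl fun u hu => ?_
            rw [← (mem_filter.mp hu).2, hvertex u]
        _ = partSize f j * (S - C j) := by rw [sum_const, nsmul_eq_mul]; rfl
    linarith
  have hS : S ≠ 0 := by
    intro hS0
    refine hx (funext fun v => ?_)
    have hC : C (f v) = 0 := by
      have := hpart (f v)
      rw [hS0, mul_zero, mul_eq_zero] at this
      exact this.resolve_left (by linarith [hm (f v)])
    have := hvertex v
    rw [hS0, hC, sub_zero, mul_eq_zero] at this
    exact this.resolve_left (by linarith [hm (f v)])
  refine mul_left_cancel₀ hS ?_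
  rw [mul_one, mul_sum]
  conv_rhs => rw [show S = ∑ j, C j from (sum_fiberwise univ f x).symm]
  refine sum_congr rfl fun j _ => ?_
  have : μ - N + 2 * partSize f j ≠ 0 := by linarith [hm j]
  rw [mul_div_assoc', div_eq_iff this]
  linarith [hpart j]

lemma signlessLaplacian_mulVec_eq_smul_of_sum_eq_one (hadj : ∀ u v, G.Adj u v ↔ f u ≠ f v)
    {c : ℝ} (hc : 0 < c) (hsum : ∑ j, (partSize f j : ℝ) / (c + 2 * partSize f j) = 1) :
    signlessLaplacian G *ᵥ (fun v => (c + 2 * partSize f (f v))⁻¹) =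
      (Fintype.card V + c) • fun v => (c + 2 * partSize f (f v))⁻¹ := by
  have hpart (j : ι) :
      ∑ u with f u = j, (c + 2 * partSize f (f u) : ℝ)⁻¹ = partSize f j / (c + 2 * partSize f j) :=
    calc ∑ u with f u = j, (c + 2 * partSize f (f u) : ℝ)⁻¹
        = ∑ u with f u = j, (c + 2 * partSize f j : ℝ)⁻¹ :=
          sum_congr rfl fun u hu => by rw [(mem_filter.mp hu).2]
      _ = partSize f j / (c + 2 * partSize f j) := by
          rw [sum_const, nsmul_eq_mul, div_eq_mul_inv]; rfl
  have htotal : ∑ u, (c + 2 * partSize f (f u) : ℝ)⁻¹ = 1 := by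
    rw [← sum_fiberwise univ f, ← hsum]
    exact sum_congr rfl fun j _ => hpart j
  funext v
  rw [signlessLaplacian_mulVec_apply_of_adj_iff hadj, htotal, hpart, Pi.smul_apply, smul_eq_mul]
  have : 0 < c + 2 * (partSize f (f v) : ℝ) := by positivity
  field_simp
  ring

end Spectrum

lemma q1_le_and_eq_iff_of_adj_iff {V ι : Type*} [Fintype V] [DecidableEq V] [Nonempty V]
    [Fintype ι] [DecidableEq ι] {G : SimpleGraph V} [DecidableRel G.Adj] {f : V → ι}
    (hf : Function.Surjective f) (hadj : ∀ u v, G.Adj u v ↔ f u ≠ f v) {c : ℝ} (hc : 0 < c)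
    (hsum : ∑ j, (partSize f j : ℝ) / (c + 2 * partSize f j) ≤ 1) :
    q1 G ≤ Fintype.card V + c ∧
      (q1 G = Fintype.card V + c ↔ ∑ j, (partSize f j : ℝ) / (c + 2 * partSize f j) = 1) := by
  have hm (j : ι) : (0 : ℝ) < partSize f j := Nat.cast_pos.mpr (partSize_pos hf j)
  have hle : q1 G ≤ Fintype.card V + c := by
    refine q1_le G fun μ x hx hQx => ?_
    by_contra! hμ
    have : Nonempty ι := .map f ‹_›
    have hlt : ∑ j, (partSize f j : ℝ) / (μ - Fintype.card V + 2 * partSize f j) <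
        ∑ j, (partSize f j : ℝ) / (c + 2 * partSize f j) :=
      sum_lt_sum_of_nonempty univ_nonempty fun j _ =>
        div_lt_div_of_pos_left (hm j) (by linarith [hm j]) (by linarith)
    linarith [sum_partSize_div_eq_one hf hadj hx hQx (by linarith)]
  refine ⟨hle, fun heq => ?_, fun hone => ?_⟩
  · obtain ⟨x, hx, hQx⟩ := exists_mulVec_eq_q1_smul G
    have := sum_partSize_div_eq_one hf hadj hx hQx (by linarith)
    rwa [heq, add_sub_cancel_left] at this
  · refine le_antisymm hle (le_q1 G (fun h => ?_)
      (signlessLaplacian_mulVec_eq_smul_of_sum_eq_one hadj hc hone))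
    exact (inv_pos.mpr (by positivity)).ne' (congrFun h (Classical.arbitrary V))

section Chord

variable {c : ℝ}

/-- The secant of `x ↦ x / (c + 2 x)` through `x = k` and `x = k + 1`. -/
noncomputable def chord (c : ℝ) (k : ℕ) (x : ℝ) : ℝ :=
  k / (c + 2 * k) + (x - k) * ((k + 1) / (c + 2 * k + 2) - k / (c + 2 * k))

lemma chord_sub_div_eq (hc : 0 < c) (k m : ℕ) :
    chord c k m - m / (c + 2 * m) =
      2 * c * ((m - k) * (m - k - 1)) / ((c + 2 * k) * (c + 2 * k + 2) * (c + 2 * m)) := by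
  have : 0 < c + 2 * (k : ℝ) := by positivity
  have : 0 < c + 2 * (m : ℝ) := by positivity
  rw [chord]
  field_simp
  ring

lemma sub_mul_sub_sub_one_pos {m k : ℕ} (hk : m ≠ k) (hk₁ : m ≠ k + 1) :
    0 < ((m : ℝ) - k) * (m - k - 1) := by
  rcases Nat.lt_or_gt_of_ne hk with h | h
  · have : (m : ℝ) + 1 ≤ k := by exact_mod_cast h
    nlinarith
  · have : (k : ℝ) + 2 ≤ m := by exact_mod_cast (show k + 2 ≤ m by omega)
    nlinarith

lemma div_le_chord (hc : 0 < c) (k m : ℕ) :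
    m / (c + 2 * m) ≤ chord c k m ∧ (m / (c + 2 * m) = chord c k m ↔ m = k ∨ m = k + 1) := by
  rw [← sub_nonneg, eq_comm, ← sub_eq_zero, chord_sub_div_eq hc]
  by_cases hm : m = k ∨ m = k + 1
  · rcases hm with rfl | rfl <;> simp
  · push Not at hm
    have := sub_mul_sub_sub_one_pos hm.1 hm.2
    have hpos : 0 < 2 * c * ((m - k) * (m - k - 1)) /
        ((c + 2 * k) * (c + 2 * k + 2) * (c + 2 * m)) := by positivity
    exact ⟨hpos.le, by simp only [hpos.ne', false_iff]; omega⟩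

lemma sum_div_le_and_eq_iff {ι : Type*} [Fintype ι] (hc : 0 < c) {k r : ℕ} (m : ι → ℕ)
    (hm : ∑ i, m i = Fintype.card ι * k + r) :
    ∑ i, (m i / (c + 2 * m i) : ℝ) ≤
        (Fintype.card ι - r) * (k / (c + 2 * k)) + r * ((k + 1) / (c + 2 * k + 2)) ∧
      (∑ i, (m i / (c + 2 * m i) : ℝ) =
          (Fintype.card ι - r) * (k / (c + 2 * k)) + r * ((k + 1) / (c + 2 * k + 2)) ↔
        ∀ i, m i = k ∨ m i = k + 1) := by
  have hchord : ∑ i, chord c k (m i) =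
      (Fintype.card ι - r) * (k / (c + 2 * k)) + r * ((k + 1) / (c + 2 * k + 2)) := by
    have hmR : ∑ i, (m i : ℝ) = Fintype.card ι * k + r := by exact_mod_cast hm
    simp only [chord]
    rw [sum_add_distrib, ← sum_mul, sum_sub_distrib, hmR]
    simp only [sum_const, card_univ, nsmul_eq_mul]
    ring
  rw [← hchord]
  exact ⟨sum_le_sum fun i _ => (div_le_chord hc k (m i)).1,
    (sum_eq_sum_iff_of_le fun i _ => (div_le_chord hc k (m i)).1).trans
      (by simp only [mem_univ, true_implies, div_le_chord hc k _])⟩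

end Chord

section TuranBound

variable {t k r : ℕ}

lemma turanBound_sub_eq :
    turanBound t k r - (t * k + r) =
      ((t * k + r - 4 * k - 2 : ℝ) +
        √((t * k + r - 4 * k - 2) ^ 2 + 8 * (t - 2) * (k ^ 2 + k))) / 2 := by
  rw [turanBound]
  ring_nf

lemma turanBound_sub_pos (ht : 2 < t) (hk : 0 < k) : 0 < turanBound t k r - (t * k + r) := by
  rw [turanBound_sub_eq]
  set A : ℝ := t * k + r - 4 * k - 2
  have hB : 0 < 8 * ((t : ℝ) - 2) * (k ^ 2 + k) := by
    have : (2 : ℝ) < t := by exact_mod_cast ht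
    have : (0 : ℝ) < k := by exact_mod_cast hk
    positivity
  have : |A| < √(A ^ 2 + 8 * (t - 2) * (k ^ 2 + k)) := by
    rw [← Real.sqrt_sq_eq_abs]
    exact Real.sqrt_lt_sqrt (sq_nonneg A) (by linarith)
  linarith [neg_le_abs A]

lemma turanBound_sub_sq (ht : 2 < t) :
    (turanBound t k r - (t * k + r)) ^ 2 =
      (t * k + r - 4 * k - 2) * (turanBound t k r - (t * k + r)) + 2 * (t - 2) * (k ^ 2 + k) := by
  rw [turanBound_sub_eq]
  have : (2 : ℝ) < t := by exact_mod_cast ht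
  have := Real.sq_sqrt (show 0 ≤ ((t * k + r - 4 * k - 2 : ℝ)) ^ 2 + 8 * (t - 2) * (k ^ 2 + k) by
    positivity)
  linear_combination this / 4

lemma turanBound_balance (ht : 2 < t) (hk : 0 < k) :
    (t - r : ℝ) * (k / (turanBound t k r - (t * k + r) + 2 * k)) +
      r * ((k + 1) / (turanBound t k r - (t * k + r) + 2 * k + 2)) = 1 := by
  have hc := turanBound_sub_pos (r := r) ht hk
  have hq := turanBound_sub_sq (k := k) (r := r) ht
  set c := turanBound t k r - (t * k + r)
  have : 0 < c + 2 * k := by positivity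
  have : 0 < c + 2 * k + 2 := by positivity
  field_simp
  linear_combination -hq

end TuranBound

section TuranGraph

lemma equitableOn_univ_iff_eq_or_eq_add_one {ι : Type*} [Fintype ι] {k r : ℕ} (m : ι → ℕ)
    (hm : ∑ i, m i = Fintype.card ι * k + r) (hr : r < Fintype.card ι) :
    (Set.univ : Set ι).EquitableOn m ↔ ∀ i, m i = k ∨ m i = k + 1 := by
  have hk : (∑ i, m i) / #(univ : Finset ι) = k := by
    rw [hm, card_univ, Nat.mul_add_div (by omega), Nat.div_eq_of_lt hr, add_zero]
  rw [← coe_univ, equitableOn_iff, hk]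
  simp

variable {V ι : Type*} [Fintype V] [DecidableEq V] {f : V → ι}
  {P : Finpartition (univ : Finset V)}

lemma card_part_eq_partSize [DecidableEq ι] (hP : ∀ u v, P.part u = P.part v ↔ f u = f v) (v : V) :
    #(P.part v) = partSize f (f v) := by
  rw [partSize]
  congr 1
  ext u
  rw [P.mem_part_iff_part_eq_part (mem_univ u) (mem_univ v), hP, mem_filter]
  simp

lemma card_parts_eq_card [Fintype ι] (hf : Function.Surjective f)
    (hP : ∀ u v, P.part u = P.part v ↔ f u = f v) : #P.parts = Fintype.card ι := by
  refine (card_bij (fun j _ => P.part (Function.surjInv hf j)) (fun j _ => P.part_mem.mpr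
    (mem_univ _)) (fun i _ j _ h => ?_) (fun p hp => ?_)).symm
  · simpa only [hP, Function.surjInv_eq hf] using h
  · obtain ⟨v, -, rfl⟩ := P.part_surjOn hp
    exact ⟨f v, mem_univ _, (hP _ _).mpr (Function.surjInv_eq hf _)⟩

lemma isEquipartition_iff_equitableOn_partSize [DecidableEq ι] (hf : Function.Surjective f)
    (hP : ∀ u v, P.part u = P.part v ↔ f u = f v) :
    P.IsEquipartition ↔ (Set.univ : Set ι).EquitableOn (partSize f) := by
  have hparts : ∀ p ∈ P.parts, ∃ v, P.part v = p := fun p hp => by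
    obtain ⟨v, -, hv⟩ := P.part_surjOn hp
    exact ⟨v, hv⟩
  simp only [Finpartition.IsEquipartition, Set.EquitableOn, mem_coe, Set.mem_univ, true_implies]
  constructor
  · intro h i j
    obtain ⟨u, rfl⟩ := hf i
    obtain ⟨v, rfl⟩ := hf j
    simpa only [card_part_eq_partSize hP] using
      h (P.part_mem.mpr (mem_univ u)) (P.part_mem.mpr (mem_univ v))
  · intro h p q hp hq
    obtain ⟨u, rfl⟩ := hparts p hp
    obtain ⟨v, rfl⟩ := hparts q hq
    simpa only [card_part_eq_partSize hP] using @h (f u) (f v)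

lemma Finpartition.IsEquipartition.nonempty_iso_turanGraph {G : SimpleGraph V}
    (hP : P.IsEquipartition) (hadj : ∀ u v, G.Adj u v ↔ P.part u ≠ P.part v) :
    Nonempty (G ≃g turanGraph (Fintype.card V) #P.parts) := by
  obtain ⟨z, hz⟩ := hP.exists_partPreservingEquiv
  refine ⟨⟨(Equiv.subtypeUnivEquiv mem_univ).symm.trans z, fun {a b} => ?_⟩⟩
  rw [turanGraph_adj, hadj, Ne, Ne, not_iff_not]
  exact (hz ⟨a, mem_univ a⟩ ⟨b, mem_univ b⟩).symm

end TuranGraph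

lemma nonempty_iso_turanGraph_iff {V ι : Type*} [Fintype V] [DecidableEq V] [Fintype ι]
    [DecidableEq ι] {G : SimpleGraph V} {f : V → ι} {k r : ℕ} (hf : Function.Surjective f)
    (hadj : ∀ u v, G.Adj u v ↔ f u ≠ f v) (hV : Fintype.card V = Fintype.card ι * k + r)
    (hr : r < Fintype.card ι) :
    Nonempty (G ≃g turanGraph (Fintype.card V) (Fintype.card ι)) ↔
      ∀ j, partSize f j = k ∨ partSize f j = k + 1 := by
  classical
  rw [← equitableOn_univ_iff_eq_or_eq_add_one _ (by rw [sum_partSize, hV]) hr]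
  constructor
  · rintro ⟨e⟩
    -- Turán's theorem: `G` is Turán-maximal, so its non-adjacency classes form an equipartition.
    have h := isTuranMaximal_of_iso e (by omega)
    have hP (u v : V) : h.finpartition.part u = h.finpartition.part v ↔ f u = f v := by
      rw [← h.not_adj_iff_part_eq, hadj, not_not]
    exact (isEquipartition_iff_equitableOn_partSize hf hP).mp h.isEquipartition
  · intro hm
    let P := Finpartition.ofSetoid (Setoid.ker f)
    have hP (u v : V) : P.part u = P.part v ↔ f u = f v := by
      rw [eq_comm, ← P.mem_part_iff_part_eq_part (mem_univ _) (mem_univ _),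
        Finpartition.mem_part_ofSetoid_iff_rel, Setoid.ker_def]
    rw [← card_parts_eq_card hf hP]
    exact ((isEquipartition_iff_equitableOn_partSize hf hP).mpr hm).nonempty_iso_turanGraph
      fun u v => by rw [hadj, Ne, Ne, hP]

theorem q1_completeMultipartite_le (n t k r : ℕ) (G : SimpleGraph (Fin n))
    (hG : IsCompleteMultipartite' G t) (ht : 3 ≤ t) (hn : n = t * k + r) (hr : r < t) :
    q1 G ≤ turanBound t k r ∧
      (q1 G = turanBound t k r ↔ Nonempty (G ≃g turanGraph n t)) := by
  classical
  obtain ⟨f, hf, hadj⟩ := hG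
  have htn : t ≤ n := by simpa using Fintype.card_le_of_surjective f hf
  have hk : 0 < k := Nat.pos_of_ne_zero fun hk => by simp [hk] at hn; omega
  have : Nonempty (Fin n) := ⟨⟨0, by omega⟩⟩
  have hnR : (n : ℝ) = t * k + r := by exact_mod_cast hn
  have hc : 0 < turanBound t k r - n := hnR ▸ turanBound_sub_pos ht hk
  have hparts := sum_div_le_and_eq_iff hc (partSize f) (k := k) (r := r)
    (by simp [sum_partSize, hn])
  have hbal := turanBound_balance (r := r) ht hk
  rw [← hnR] at hbal
  rw [Fintype.card_fin, hbal] at hparts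
  have hiso := nonempty_iso_turanGraph_iff hf hadj (k := k) (r := r)
    (by simp [hn]) (by simpa using hr)
  rw [Fintype.card_fin, Fintype.card_fin] at hiso
  obtain ⟨hle, heq⟩ := q1_le_and_eq_iff_of_adj_iff hf hadj hc hparts.1
  rw [Fintype.card_fin, add_sub_cancel] at hle heq
  exact ⟨hle, heq.trans (hparts.2.trans hiso.symm)⟩
end

section
/- Let n = kt + r with t ≥ 3, k ≥ 1, 0 ≤ r < t. Then the floor of n·q₁(T_{n,t})/4 equals the number of edges of T_{n,t}, where q₁(T_{n,t}) = ((3t−4)k + 3r − 2 + √(t²k² + ((2r+4)t − 8r)k + (r−2)²))/2. -/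
open SimpleGraph

/-!
Let `e` be the number of edges of `T_{n,t}`, so `n · q₁ / 4 = (n A + n √D) / 8` where `A` and `D`
are the rational part and the radicand of `2 q₁`. The squares of the part sizes sum to
`n k + r (k + 1)`, so `2 e = n² - (n k + r (k + 1))`. Put `X = 8 e - n A`; then
`n² D = X² + 16 k r (k + 1) (t - r)`, and the defect `k r (k + 1) (t - r)` is smaller than
`X + 4`. Hence `X² ≤ n² D < (X + 8)²`, that is `e ≤ n q₁ / 4 < e + 1`.
-/

open Finset

lemma two_mul_choose_two_add_self (n : ℕ) : 2 * n.choose 2 + n = n ^ 2 := by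
  rw [Nat.choose_two_right, Nat.mul_div_cancel' (Nat.even_mul_pred_self n).two_dvd]
  cases n <;> simp [sq]; ring

theorem two_mul_card_edgeFinset_turanGraph {k t r : ℕ} (hr : r < t) :
    2 * #(turanGraph (k * t + r) t).edgeFinset + ((k * t + r) * k + r * (k + 1)) =
      (k * t + r) ^ 2 := by
  induction k with
  | zero =>
    have hK : #(turanGraph r t).edgeFinset = r.choose 2 := by
      have := card_edgeFinset_top_eq_card_choose_two (V := Fin r)
      rw [Fintype.card_fin] at this
      convert this
      exact turanGraph_eq_top.2 (.inr hr.le)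
    rw [zero_mul, zero_add, hK]
    simpa using two_mul_choose_two_add_self r
  | succ k ih =>
    have hn : (k + 1) * t + r = (k * t + r) + t := by ring
    have ht := two_mul_choose_two_add_self t
    have ht1 : t - 1 + 1 = t := Nat.sub_add_cancel (Nat.one_le_of_lt hr)
    rw [hn, card_edgeFinset_turanGraph_add]
    nlinarith [ih, ht, ht1]

lemma turan_defect_lt {k t r : ℕ} (hr : r < t) :
    (k * r * (k + 1) * (t - r) : ℝ) <
      (k * t - r) ^ 2 + 2 * (k * t - r) + 4 * k * r * (t - 1) + 4 := by
  obtain ⟨s, rfl⟩ := Nat.exists_eq_add_of_lt hr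
  have hrr : (r : ℝ) ≤ r ^ 2 := by exact_mod_cast Nat.le_self_pow two_ne_zero r
  -- with `t = r + s + 1`, the gap is `hpos`'s sum plus `k (r² - r) + 3`
  have hkr : (0 : ℝ) ≤ k * (r ^ 2 - r) := mul_nonneg k.cast_nonneg (sub_nonneg.2 hrr)
  have hpos : (0 : ℝ) ≤ k ^ 2 * r ^ 2 + k ^ 2 * (s + 1) ^ 2 + k ^ 2 * r * (s + 1) + k * r ^ 2
      + k * r * s + 2 * k * (s + 1) + (r - 1) ^ 2 := by positivity
  push_cast
  linarith

theorem floor_mul_turanBound_div_four {t k r E : ℕ} (hr : r < t)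
    (hE : 2 * E + ((k * t + r) * k + r * (k + 1)) = (k * t + r) ^ 2) :
    ⌊((k * t + r : ℕ) : ℝ) * turanBound t k r / 4⌋ = E := by
  replace hE : 2 * (E : ℝ) + ((k * t + r) * k + r * (k + 1)) = (k * t + r) ^ 2 := by
    exact_mod_cast hE
  rw [Int.floor_eq_iff, turanBound]
  push_cast
  set N : ℝ := k * t + r with hN
  set A : ℝ := (3 * t - 4) * k + 3 * r - 2 with hA
  set D : ℝ := (k : ℝ) ^ 2 * t ^ 2 + ((2 * r + 4) * t - 8 * r) * k + (r - 2) ^ 2 with hD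
  replace hE : 8 * (E : ℝ) = 4 * (N ^ 2 - (N * k + r * (k + 1))) := by linarith
  set X : ℝ := 8 * E - N * A with hX
  have hXpoly : X = (k * t - r) ^ 2 + 2 * (k * t - r) + 4 * k * r * (t - 1) := by
    rw [hX, hE, hN, hA]; ring
  have hdefect : N ^ 2 * D = X ^ 2 + 16 * (k * r * (k + 1) * (t - r)) := by
    rw [hX, hE, hN, hA, hD]; ring
  have hdefect_nonneg : (0 : ℝ) ≤ k * r * (k + 1) * (t - r) := by
    have : (0 : ℝ) ≤ t - r := sub_nonneg.2 (by exact_mod_cast hr.le)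
    positivity
  have hdefect_lt := turan_defect_lt (k := k) hr
  rw [← hXpoly] at hdefect_lt
  have hND : N * √D = √(N ^ 2 * D) := by
    rw [Real.sqrt_mul (sq_nonneg N), Real.sqrt_sq (by positivity)]
  have hlow : X ≤ N * √D :=
    hND ▸ (le_abs_self X).trans (Real.abs_le_sqrt (by linarith))
  have hup : N * √D < X + 8 :=
    hND ▸ (Real.sqrt_lt' (by linarith)).2 (by linarith)
  constructor <;> linarith

theorem floor_n_mul_q1_turan_general (n t k r : ℕ)
    (hn : n = k * t + r) (hr : r < t) :
    ⌊(n : ℝ) * turanBound t k r / 4⌋ = ((turanGraph n t).edgeSet.ncard : ℤ) := by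
  subst hn
  rw [← coe_edgeFinset, Set.ncard_coe_finset]
  exact floor_mul_turanBound_div_four hr (two_mul_card_edgeFinset_turanGraph hr)

theorem floor_n_mul_q1_turan (n t k r : ℕ) (ht : 3 ≤ t) (hk : 1 ≤ k)
    (hn : n = k * t + r) (hr : r < t) :
    ⌊(n : ℝ) * turanBound t k r / 4⌋ = ((turanGraph n t).edgeSet.ncard : ℤ) :=
  floor_n_mul_q1_turan_general n t k r hn hr
end

section
/- Let G be a connected simple graph of order n with clique number ω. Then q₁(G)/ω ≤ n/2. -/
open SimpleGraph

/-!
Let `μ > 0` be an eigenvalue of `Q(G)` with eigenvector `x`, and let `u` maximise `|x v| / d(v)`.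
The eigen-equation at `u` gives `μ d(u) ≤ d(u)² + ∑_{w ∼ u} d(w)`.
Each neighbour `w` of `u` has at most `n - d(u)` neighbours outside `N(u)`, and `G[N(u)]` is
`K_ω`-free, so Turán's theorem bounds `∑_{w ∼ u} d(w)` and yields
`(ω - 1) μ ≤ (2ω - 3) n`.
Finally `2 (2ω - 3) ≤ ω (ω - 1)` because `(ω - 2)(ω - 3) ≥ 0`.
-/

open Finset Matrix

namespace SimpleGraph

section Cliques

variable {V : Type*} {G : SimpleGraph V}

theorem CliqueFree.induce_neighborSet {r : ℕ} (h : G.CliqueFree (r + 1)) (u : V) :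
    (G.induce (G.neighborSet u)).CliqueFree r := by
  rw [cliqueFree_induce_iff]
  simpa using h.cliqueFreeOn.of_succ (G := G) (Set.mem_univ u)

variable [Finite V]

theorem cliqueFree_cliqueNum_succ : G.CliqueFree (G.cliqueNum + 1) := fun s hs => by
  have := hs.isClique.card_le_cliqueNum
  rw [hs.card_eq] at this
  omega

theorem Adj.two_le_cliqueNum {u w : V} (h : G.Adj u w) : 2 ≤ G.cliqueNum := by
  classical
  have hclique : G.IsClique (({u, w} : Finset V) : Set V) := by
    rw [coe_pair]
    exact isClique_pair.mpr fun _ => h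
  simpa [card_pair h.ne] using hclique.card_le_cliqueNum

end Cliques

section Degrees

variable {V : Type*} [Fintype V] {G : SimpleGraph V} [DecidableRel G.Adj]

theorem CliqueFree.two_mul_mul_card_edgeFinset_le {r : ℕ} (h : G.CliqueFree (r + 1)) :
    2 * r * #G.edgeFinset ≤ (r - 1) * Fintype.card V ^ 2 := by
  rcases r.eq_zero_or_pos with rfl | hr
  · simp
  obtain ⟨H, _, hH⟩ := exists_isTuranMaximal (V := V) hr
  calc 2 * r * #G.edgeFinset ≤ 2 * r * #H.edgeFinset := Nat.mul_le_mul_left _ (hH.2 h)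
    _ = 2 * r * #(turanGraph (Fintype.card V) r).edgeFinset := by
      rw [hH.nonempty_iso_turanGraph.some.card_edgeFinset_eq]
    _ ≤ (r - 1) * Fintype.card V ^ 2 := mul_card_edgeFinset_turanGraph_le

variable [DecidableEq V]

theorem sum_card_neighborFinset_inter_eq (u : V) :
    ∑ w ∈ G.neighborFinset u, #(G.neighborFinset w ∩ G.neighborFinset u) =
      2 * #(G.induce (G.neighborSet u)).edgeFinset := by
  rw [← sum_degrees_eq_twice_card_edges,
    sum_subtype (p := (· ∈ G.neighborSet u)) _ fun w => by simp]
  refine Fintype.sum_congr _ _ fun w => ?_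
  rw [← card_neighborFinset_eq_degree, ← card_map (.subtype (· ∈ G.neighborSet u)),
    map_neighborFinset_induce, neighborFinset_def (G := G) (v := u)]

theorem sum_degree_neighborFinset_le (u : V) :
    ∑ w ∈ G.neighborFinset u, G.degree w ≤
      2 * #(G.induce (G.neighborSet u)).edgeFinset +
        G.degree u * (Fintype.card V - G.degree u) := by
  have hdeg (w : V) : G.degree w ≤
      #(G.neighborFinset w ∩ G.neighborFinset u) + (Fintype.card V - G.degree u) := by
    rw [← card_neighborFinset_eq_degree, ← card_neighborFinset_eq_degree, ← card_compl,
      ← card_inter_add_card_sdiff (G.neighborFinset w) (G.neighborFinset u),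
      sdiff_eq_inter_compl]
    gcongr
    exact inter_subset_right
  calc ∑ w ∈ G.neighborFinset u, G.degree w
      ≤ ∑ w ∈ G.neighborFinset u,
          (#(G.neighborFinset w ∩ G.neighborFinset u) + (Fintype.card V - G.degree u)) :=
        sum_le_sum fun w _ => hdeg w
    _ = _ := by
      rw [sum_add_distrib, sum_card_neighborFinset_inter_eq, sum_const,
        card_neighborFinset_eq_degree, smul_eq_mul]

theorem CliqueFree.succ_mul_sum_degree_neighborFinset_le {r : ℕ} (h : G.CliqueFree (r + 3))
    (u : V) :
    (r + 1) * ∑ w ∈ G.neighborFinset u, G.degree w ≤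
      r * G.degree u ^ 2 + (r + 1) * (G.degree u * (Fintype.card V - G.degree u)) := by
  have hturan := (h.induce_neighborSet u).two_mul_mul_card_edgeFinset_le (r := r + 1)
  rw [card_neighborSet_eq_degree, Nat.add_sub_cancel] at hturan
  have := Nat.mul_le_mul_left (r + 1) (sum_degree_neighborFinset_le (G := G) u)
  rw [mul_add] at this
  linarith

end Degrees

section SignlessLaplacian

variable {V : Type*} [Fintype V] [DecidableEq V] (G : SimpleGraph V) [DecidableRel G.Adj]

theorem signlessLaplacian_mulVec_apply (x : V → ℝ) (v : V) :
    (signlessLaplacian G *ᵥ x) v = G.degree v * x v + ∑ w ∈ G.neighborFinset v, x w := by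
  simp only [signlessLaplacian, add_mulVec, Pi.add_apply, mulVec_diagonal,
    adjMatrix_mulVec_apply]
  congr!

variable {G} {μ : ℝ} {x : V → ℝ}

theorem exists_eigenvalue_mul_degree_le (hμ : μ ≠ 0) (hx : x ≠ 0)
    (h : signlessLaplacian G *ᵥ x = μ • x) :
    ∃ u, 0 < G.degree u ∧
      μ * G.degree u ≤ G.degree u ^ 2 + ∑ w ∈ G.neighborFinset u, (G.degree w : ℝ) := by
  have heig (v : V) : (μ - G.degree v) * x v = ∑ w ∈ G.neighborFinset v, x w := by
    have := congrFun h v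
    rw [signlessLaplacian_mulVec_apply, Pi.smul_apply, smul_eq_mul] at this
    linarith
  obtain ⟨v₀, hv₀⟩ : ∃ v, x v ≠ 0 := Function.ne_iff.mp hx
  have : Nonempty V := ⟨v₀⟩
  obtain ⟨u, hu⟩ := Finite.exists_max fun v => |x v| / G.degree v
  set ρ := |x u| / G.degree u
  -- An isolated vertex `v` has `μ x v = 0`, so `x` lives on the non-isolated vertices.
  have hdeg₀ : 0 < G.degree v₀ := by
    by_contra! h0
    have hN : G.neighborFinset v₀ = ∅ := by
      rw [← card_eq_zero, card_neighborFinset_eq_degree]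
      omega
    exact hv₀ (by simpa [hN, Nat.le_zero.mp h0, hμ] using heig v₀)
  have hρ : 0 < ρ := (div_pos (abs_pos.mpr hv₀) (by exact_mod_cast hdeg₀)).trans_le (hu v₀)
  have hdeg : 0 < G.degree u := by
    by_contra! h0
    simp [ρ, Nat.le_zero.mp h0] at hρ
  have hxu : |x u| = G.degree u * ρ := by
    rw [mul_div_cancel₀]
    exact_mod_cast hdeg.ne'
  have hxw : ∀ w ∈ G.neighborFinset u, |x w| ≤ G.degree w * ρ := by
    intro w hw
    have hwpos : (0 : ℝ) < G.degree w := by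
      exact_mod_cast (G.degree_pos_iff_exists_adj w).mpr
        ⟨u, ((G.mem_neighborFinset u w).mp hw).symm⟩
    exact (div_le_iff₀' hwpos).mp (hu w)
  refine ⟨u, hdeg, le_of_mul_le_mul_right ?_ hρ⟩
  calc μ * G.degree u * ρ = G.degree u ^ 2 * ρ + (μ - G.degree u) * |x u| := by
        rw [hxu]; ring
    _ ≤ G.degree u ^ 2 * ρ + |∑ w ∈ G.neighborFinset u, x w| := by
      rw [← heig, abs_mul]
      gcongr
      exact le_abs_self _
    _ ≤ G.degree u ^ 2 * ρ + ∑ w ∈ G.neighborFinset u, G.degree w * ρ := by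
      gcongr
      exact (abs_sum_le_sum_abs _ _).trans (sum_le_sum hxw)
    _ = _ := by rw [← sum_mul, add_mul]

theorem CliqueFree.succ_mul_eigenvalue_le {r : ℕ} (hG : G.CliqueFree (r + 3)) (hx : x ≠ 0)
    (h : signlessLaplacian G *ᵥ x = μ • x) :
    (r + 1) * μ ≤ (2 * r + 1) * Fintype.card V := by
  rcases le_or_gt μ 0 with hμ | hμ
  · have : (0 : ℝ) ≤ (2 * r + 1) * Fintype.card V := by positivity
    nlinarith
  obtain ⟨u, hdeg, hμu⟩ := exists_eigenvalue_mul_degree_le hμ.ne' hx h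
  have hdn := G.degree_lt_card_verts u
  have hsum := (Nat.cast_le (α := ℝ)).mpr (hG.succ_mul_sum_degree_neighborFinset_le u)
  push_cast [Nat.cast_sub hdn.le] at hsum
  set d := G.degree u
  set N := Fintype.card V
  have hd : (1 : ℝ) ≤ d := by exact_mod_cast hdeg
  have hdN : (d : ℝ) + 1 ≤ N := by exact_mod_cast hdn
  have hr : (0 : ℝ) ≤ r := r.cast_nonneg
  refine le_of_mul_le_mul_right ?_ (zero_lt_one.trans_le hd)
  calc (r + 1) * μ * d
        ≤ (r + 1) * (d ^ 2 + ∑ w ∈ G.neighborFinset u, (G.degree w : ℝ)) := by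
          rw [mul_assoc]; gcongr
    _ ≤ r * d * d + (r + 1) * N * d := by nlinarith
    _ ≤ r * (N - 1) * d + (r + 1) * N * d := by gcongr; linarith
    _ ≤ (2 * r + 1) * N * d := by nlinarith

theorem two_mul_eigenvalue_le_cliqueNum_mul_card (hx : x ≠ 0)
    (h : signlessLaplacian G *ᵥ x = μ • x) :
    2 * μ ≤ G.cliqueNum * Fintype.card V := by
  rcases le_or_gt μ 0 with hμ | hμ
  · have : (0 : ℝ) ≤ G.cliqueNum * Fintype.card V := by positivity
    linarith
  obtain ⟨u, hdeg, -⟩ := exists_eigenvalue_mul_degree_le hμ.ne' hx h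
  obtain ⟨w, huw⟩ := (G.degree_pos_iff_exists_adj u).mp hdeg
  obtain ⟨r, hr⟩ := Nat.exists_eq_add_of_le' huw.two_le_cliqueNum
  have hμr := (hr ▸ G.cliqueFree_cliqueNum_succ).succ_mul_eigenvalue_le hx h
  have hr2 : (2 * r + 1 : ℝ) * 2 ≤ (r + 1) * (r + 2) := by
    have : (r : ℝ) ≤ r * r := by exact_mod_cast Nat.le_mul_self r
    nlinarith
  rw [hr]
  push_cast
  nlinarith [(Fintype.card V).cast_nonneg (α := ℝ)]

end SignlessLaplacian

end SimpleGraph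

theorem q1_div_cliqueNum_le_general (n : ℕ) (G : SimpleGraph (Fin n)) :
    q1 G / (G.cliqueNum : ℝ) ≤ (n : ℝ) / 2 := by
  classical
  obtain hω | hω := G.cliqueNum.eq_zero_or_pos
  · simp only [hω, Nat.cast_zero, div_zero]
    positivity
  rw [div_le_iff₀ (by exact_mod_cast hω)]
  refine Real.sSup_le (fun μ ⟨x, hx, h⟩ => ?_) (by positivity)
  have := G.two_mul_eigenvalue_le_cliqueNum_mul_card hx h
  rw [Fintype.card_fin] at this
  linarith

theorem q1_div_cliqueNum_le (n : ℕ) (G : SimpleGraph (Fin n)) (hconn : G.Connected) :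
    q1 G / (G.cliqueNum : ℝ) ≤ (n : ℝ) / 2 :=
  q1_div_cliqueNum_le_general n G
end
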